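/- Fix integers a, b ≥ 3, n = a + b − 1, and let H be the set of pairs (I, J) of nonempty compositions with all parts of the concatenation I·J at least 2, |I·J| = n, and a − j_1 + 1 ≤ |I| ≤ a − 1 (equivalently j_1 ≥ |J| − b + 2). Then the concatenation map h : H → {compositions of n with all parts ≥ 2}, h(I,J) = I·J, is injective. -/
import Mathlib


/-- with `a, b ≥ 3` and `n = a + b − 1`, the concatenation map is injective on
the set `H` of pairs `(I, J)` of nonempty compositions with all parts of `I·J` at least 2,
`|I·J| = n`, and `a − j₁ + 1 ≤ |I| ≤ a − 1` (the lower bound written as `a + 1 ≤ |I| + j₁`). -/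
theorem concat_injective (a b : ℕ) (ha : 3 ≤ a) (hb : 3 ≤ b)
    (I₁ J₁ I₂ J₂ : List ℕ)
    (hI₁ : I₁ ≠ []) (hJ₁ : J₁ ≠ []) (hI₂ : I₂ ≠ []) (hJ₂ : J₂ ≠ [])
    (hp₁ : ∀ x ∈ I₁ ++ J₁, 2 ≤ x) (hp₂ : ∀ x ∈ I₂ ++ J₂, 2 ≤ x)
    (hs₁ : (I₁ ++ J₁).sum = a + b - 1) (hs₂ : (I₂ ++ J₂).sum = a + b - 1)
    (hlo₁ : a + 1 ≤ I₁.sum + J₁.headI) (hhi₁ : I₁.sum ≤ a - 1)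
    (hlo₂ : a + 1 ≤ I₂.sum + J₂.headI) (hhi₂ : I₂.sum ≤ a - 1)
    (heq : I₁ ++ J₁ = I₂ ++ J₂) :
    I₁ = I₂ ∧ J₁ = J₂ := by
  rcases List.append_eq_append_iff.mp heq with ⟨K, hI, hJ⟩ | ⟨K, hI, hJ⟩
  · rcases K with _ | ⟨k, K⟩
    · simp_all
    · exfalso
      have h1 : J₁.headI = k := by subst hJ; rfl
      have h2 : I₂.sum = I₁.sum + (k + K.sum) := by subst hI; simp
      omega
  · rcases K with _ | ⟨k, K⟩
    · simp_all
    · exfalso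
      have h1 : J₂.headI = k := by subst hJ; rfl
      have h2 : I₁.sum = I₂.sum + (k + K.sum) := by subst hI; simp
      omega
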